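/- arXiv:1809.09780 — 3 statements merged into one kernel-verified Lean document; each statement's English description precedes it below -/
import Mathlib

section
/- Let τ be an ergodic invertible measure-preserving transformation of a nonatomic standard probability space, and let (ε_n) be a sequence with 0 < ε_n < 1/2 for all n and ε_n decreasing to 0. Then there exists a measurable set E with m(E) > 0 such that m(⋃_{k=1}^n τ^k(E)) ≤ 1 − ε_n for every n ≥ 1. -/
/-!
Write `sweep f s n = ⋃_{1 ≤ k ≤ n} f⁻ᵏ(s)`, with `f = τ⁻¹`. Given a set `G` of small positive
measure, the sweeps of `G` increase to a set of full measure by ergodicity. Take `L` with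
`μ(sweep f G L) ≤ η + N μ(G) < μ(sweep f G (L + 1))` and delete `M = sweep f G L \ f⁻¹(G)`.
A point whose first visit to `G` happens at a time in `(n + 1, L + 1]` lies in `M` at each of the
times `1, …, n`, and for `n < N` these points have measure at least `η`; so the sweep up to time
`n` of any set disjoint from `M` has measure at most `1 - η`.
Run this in stages: stage `k` serves the times `n < N k` with `ε n ≤ η k` and costs `η' k`,
with `∑ η' k < 1`. The complement of all the deleted sets then has positive measure.
-/

open MeasureTheory Filter Set Topology
open scoped ENNReal

theorem exists_le_and_lt_succ_of_exists_lt {α : Type*} [LinearOrder α] {u : ℕ → α} {x : α}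
    (h0 : u 0 ≤ x) (h : ∃ n, x < u n) : ∃ n, u n ≤ x ∧ x < u (n + 1) := by
  classical
  obtain ⟨n, hn⟩ : ∃ n, Nat.find h = n + 1 :=
    Nat.exists_eq_succ_of_ne_zero fun h' => (Nat.find_eq_zero h).1 h' |>.not_ge h0
  exact ⟨n, not_lt.1 (Nat.find_min h (by omega)), hn ▸ Nat.find_spec h⟩

theorem exists_measurableSet_measure_pos_lt_of_metric {X : Type*} [MetricSpace X]
    [HereditarilyLindelofSpace X] [MeasurableSpace X] [OpensMeasurableSpace X]
    (μ : Measure X) [IsFiniteMeasure μ] [NullSingletonClass μ] (hμ : μ ≠ 0)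
    {c : ℝ≥0∞} (hc : 0 < c) : ∃ s, MeasurableSet s ∧ 0 < μ s ∧ μ s < c := by
  obtain ⟨x, hx⟩ := μ.nonempty_support hμ
  have hballs : Tendsto (μ ∘ Metric.ball x) (𝓝[>] 0) (𝓝 0) := by
    simpa [Metric.biInter_gt_ball] using tendsto_measure_biInter_gt (μ := μ) (a := 0)
      (fun r _ => measurableSet_ball.nullMeasurableSet)
      (fun _ _ _ hij => Metric.ball_subset_ball hij) ⟨1, one_pos, measure_ne_top _ _⟩
  obtain ⟨r, hr, hr0⟩ := ((hballs.eventually (gt_mem_nhds hc)).and self_mem_nhdsWithin).exists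
  exact ⟨_, measurableSet_ball,
    (Measure.mem_support_iff_forall x).1 hx _ (Metric.ball_mem_nhds x hr0), hr⟩

theorem exists_measurableSet_measure_pos_lt {X : Type*} [MeasurableSpace X]
    [StandardBorelSpace X] (μ : Measure X) [IsFiniteMeasure μ] [NullSingletonClass μ]
    (hμ : μ ≠ 0) {c : ℝ≥0∞} (hc : 0 < c) : ∃ s, MeasurableSet s ∧ 0 < μ s ∧ μ s < c := by
  let := upgradeStandardBorel X
  let := TopologicalSpace.upgradeIsCompletelyMetrizable X
  exact exists_measurableSet_measure_pos_lt_of_metric μ hμ hc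

/-- `sweep τ.symm E n` is the set `⋃_{k=1}^n τᵏ(E)` of the theorem. -/
def sweep {α : Type*} (f : α → α) (s : Set α) (n : ℕ) : Set α :=
  ⋃ k ∈ Finset.Icc 1 n, f^[k] ⁻¹' s

section Sweep

variable {α : Type*} {f : α → α} {s : Set α} {n : ℕ}

theorem mem_sweep {x : α} : x ∈ sweep f s n ↔ ∃ k, (1 ≤ k ∧ k ≤ n) ∧ f^[k] x ∈ s := by
  simp [sweep]

@[simp]
theorem sweep_zero : sweep f s 0 = ∅ := by
  simp [sweep]

theorem monotone_sweep : Monotone (sweep f s) := fun _ _ hmn _ hx =>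
  let ⟨k, hk, hkx⟩ := mem_sweep.1 hx
  mem_sweep.2 ⟨k, ⟨hk.1, hk.2.trans hmn⟩, hkx⟩

theorem preimage_sweep_subset : f ⁻¹' sweep f s n ⊆ sweep f s (n + 1) := fun x hx => by
  obtain ⟨k, hk, hkx⟩ := mem_sweep.1 hx
  exact mem_sweep.2 ⟨k + 1, ⟨by omega, by omega⟩, by rwa [Function.iterate_succ_apply]⟩

theorem disjoint_sweep_sweep_diff {B : Set α} {L : ℕ} (hB : B ⊆ (sweep f s L \ f ⁻¹' s)ᶜ) :
    Disjoint (sweep f B n) (sweep f s (L + 1) \ sweep f s (n + 1)) := by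
  refine disjoint_left.2 fun x hxB ⟨hxL, hxn⟩ => ?_
  obtain ⟨k, hk, hkB⟩ := mem_sweep.1 hxB
  obtain ⟨j, hj, hjs⟩ := mem_sweep.1 hxL
  have hnj : n + 1 < j := not_le.1 fun h => hxn (mem_sweep.2 ⟨j, ⟨hj.1, h⟩, hjs⟩)
  refine hB hkB ⟨mem_sweep.2 ⟨j - k, ⟨by omega, by omega⟩, ?_⟩, fun hks => ?_⟩
  · rwa [← Function.iterate_add_apply, Nat.sub_add_cancel (by omega)]
  · exact hxn (mem_sweep.2 ⟨k + 1, ⟨by omega, by omega⟩, by rwa [Function.iterate_succ_apply']⟩)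

variable [MeasurableSpace α] {μ : Measure α}

theorem measurableSet_sweep (hf : Measurable f) (hs : MeasurableSet s) :
    MeasurableSet (sweep f s n) :=
  .biUnion (Finset.Icc 1 n).countable_toSet fun k _ => hf.iterate k hs

theorem measure_sweep_le (hf : MeasurePreserving f μ μ) (hs : MeasurableSet s) :
    μ (sweep f s n) ≤ n * μ s := by
  calc μ (sweep f s n) ≤ ∑ k ∈ Finset.Icc 1 n, μ (f^[k] ⁻¹' s) := measure_biUnion_finset_le _ _
    _ = n * μ s := by
      simp [(hf.iterate _).measure_preimage hs.nullMeasurableSet]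

theorem Ergodic.tendsto_measure_sweep [IsProbabilityMeasure μ] (hf : Ergodic f μ)
    (hs : MeasurableSet s) (hs0 : μ s ≠ 0) :
    Tendsto (fun n => μ (sweep f s n)) atTop (𝓝 1) := by
  have hS : MeasurableSet (⋃ n, sweep f s n) :=
    .iUnion fun n => measurableSet_sweep hf.measurable hs
  have hinv : f ⁻¹' ⋃ n, sweep f s n ⊆ ⋃ n, sweep f s n := by
    simp only [preimage_iUnion]
    exact iUnion_mono' fun n => ⟨n + 1, preimage_sweep_subset⟩
  have hsub : f ⁻¹' s ⊆ ⋃ n, sweep f s n := fun x hx =>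
    mem_iUnion.2 ⟨1, mem_sweep.2 ⟨1, ⟨le_rfl, le_rfl⟩, hx⟩⟩
  rcases hf.ae_empty_or_univ_of_preimage_ae_le hS.nullMeasurableSet hinv.eventuallyLE with h | h
  · refine absurd (le_antisymm ?_ zero_le) hs0
    calc μ s = μ (f ⁻¹' s) := (hf.measure_preimage hs.nullMeasurableSet).symm
      _ ≤ μ (⋃ n, sweep f s n) := measure_mono hsub
      _ = 0 := by simp [measure_congr h]
  · have := tendsto_measure_iUnion_atTop (μ := μ) (monotone_sweep (f := f) (s := s))
    rwa [measure_congr h, measure_univ] at this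

theorem Ergodic.exists_forall_measure_sweep_le_of_measure_ne_zero [IsProbabilityMeasure μ]
    (hf : Ergodic f μ) {G : Set α} (hG : MeasurableSet G) (hG0 : μ G ≠ 0) (N : ℕ) {η : ℝ≥0∞}
    (hη : η + N * μ G < 1) :
    ∃ M, MeasurableSet M ∧ μ M ≤ η + N * μ G ∧
      ∀ B ⊆ Mᶜ, ∀ n < N, μ (sweep f B n) ≤ 1 - η := by
  have hsweep : ∀ n, MeasurableSet (sweep f G n) := fun n => measurableSet_sweep hf.measurable hG
  obtain ⟨L, hL, hL1⟩ := exists_le_and_lt_succ_of_exists_lt (u := fun n => μ (sweep f G n))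
    (by simp) ((hf.tendsto_measure_sweep hG hG0).eventually (lt_mem_nhds hη)).exists
  refine ⟨sweep f G L \ f ⁻¹' G, (hsweep L).diff (hf.measurable hG),
    (measure_mono sdiff_subset).trans hL, fun B hB n hn => ?_⟩
  set P := sweep f G (L + 1) \ sweep f G (n + 1)
  have hPη : η ≤ μ P := by
    have hn : μ (sweep f G (n + 1)) ≤ N * μ G :=
      (measure_sweep_le hf.toMeasurePreserving hG).trans (by gcongr; exact_mod_cast hn)
    have : η + N * μ G < μ P + N * μ G :=
      calc η + N * μ G < μ (sweep f G (L + 1)) := hL1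
        _ ≤ μ P + μ (sweep f G (n + 1)) :=
          (measure_mono (subset_sdiff_union _ _)).trans (measure_union_le _ _)
        _ ≤ μ P + N * μ G := by gcongr
    exact (lt_of_add_lt_add_right this).le
  calc μ (sweep f B n) ≤ μ Pᶜ :=
        measure_mono (disjoint_sweep_sweep_diff hB).subset_compl_right
    _ = 1 - μ P := prob_compl_eq_one_sub ((hsweep _).diff (hsweep _))
    _ ≤ 1 - η := tsub_le_tsub_left hPη 1

end Sweep

theorem Ergodic.exists_forall_measure_sweep_le {X : Type*} [MeasurableSpace X]
    [StandardBorelSpace X] {μ : Measure X} [IsProbabilityMeasure μ] [NullSingletonClass μ]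
    {f : X → X} (hf : Ergodic f μ) (N : ℕ) {η η' : ℝ≥0∞} (h : η < η') (h' : η' ≤ 1) :
    ∃ M, MeasurableSet M ∧ μ M ≤ η' ∧ ∀ B ⊆ Mᶜ, ∀ n < N, μ (sweep f B n) ≤ 1 - η := by
  obtain ⟨G, hG, hG0, hGlt⟩ :=
    exists_measurableSet_measure_pos_lt μ (IsProbabilityMeasure.ne_zero μ) (c := (η' - η) / N)
    (ENNReal.div_pos (tsub_pos_of_lt h).ne' (ENNReal.natCast_ne_top N))
  have hθ : η + N * μ G < η' := by
    rw [mul_comm, ← lt_tsub_iff_left]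
    exact ENNReal.mul_lt_of_lt_div hGlt
  obtain ⟨M, hM, hMθ, hMsweep⟩ :=
    hf.exists_forall_measure_sweep_le_of_measure_ne_zero hG hG0.ne' N (hθ.trans_le h')
  exact ⟨M, hM, hMθ.trans hθ.le, hMsweep⟩

/-- Stage `k` serves the times `n < N k` at target `η k < η' k`, and `η' k` is what it costs. -/
theorem exists_stages {ε : ℕ → ℝ≥0∞} {c : ℝ≥0∞} (hc : ∀ n, ε n ≤ c) (hc1 : c < 1)
    (hε : Tendsto ε atTop (𝓝 0)) :
    ∃ (N : ℕ → ℕ) (η η' : ℕ → ℝ≥0∞), (∀ k, η k < η' k) ∧ ∑' k, η' k < 1 ∧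
      ∀ n, ∃ k, n < N k ∧ ε n ≤ η k := by
  obtain ⟨w, hw0, hw⟩ := ENNReal.exists_pos_sum_of_countable (tsub_pos_of_lt hc1).ne' ℕ
  let η k := (Pi.single 0 c : ℕ → ℝ≥0∞) k + (w k : ℝ≥0∞) / 2
  let η' k := (Pi.single 0 c : ℕ → ℝ≥0∞) k + (w k : ℝ≥0∞)
  have hηpos : ∀ k, 0 < η k := fun k =>
    (ENNReal.half_pos (ENNReal.coe_ne_zero.2 (hw0 k).ne')).trans_le le_add_self
  choose T hT using fun k => eventually_atTop.1
    ((hε.eventually (eventually_le_nhds (hηpos k))).and (eventually_ge_atTop k))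
  refine ⟨fun k => T (k + 1), η, η', fun k => ?_, ?_, fun n => ?_⟩
  · refine ENNReal.add_lt_add_left ?_ (ENNReal.half_lt_self (by simpa using (hw0 k).ne') (by simp))
    rcases eq_or_ne k 0 with rfl | hk <;> simp [*, hc1.ne_top]
  · calc ∑' k, η' k = c + ∑' k, (w k : ℝ≥0∞) := by rw [ENNReal.tsum_add, tsum_pi_single]
      _ < 1 := lt_tsub_iff_left.1 hw
  · by_cases hn : n < T 1
    · exact ⟨0, hn, (hc n).trans (by simp [η])⟩
    · obtain ⟨k, hk, hk1⟩ := exists_le_and_lt_succ_of_exists_lt (u := fun k => T (k + 1))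
        (not_lt.1 hn) ⟨n, (hT (n + 1) _ le_rfl).2⟩
      exact ⟨k + 1, hk1, (hT (k + 1) n hk).1⟩

theorem Ergodic.exists_measure_pos_forall_measure_sweep_le {X : Type*} [MeasurableSpace X]
    [StandardBorelSpace X] {μ : Measure X} [IsProbabilityMeasure μ] [NullSingletonClass μ]
    {f : X → X} (hf : Ergodic f μ) {ε : ℕ → ℝ≥0∞} {c : ℝ≥0∞} (hc : ∀ n, ε n ≤ c) (hc1 : c < 1)
    (hε : Tendsto ε atTop (𝓝 0)) :
    ∃ E, MeasurableSet E ∧ 0 < μ E ∧ ∀ n, μ (sweep f E n) ≤ 1 - ε n := by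
  obtain ⟨N, η, η', hlt, hsum, hcover⟩ := exists_stages hc hc1 hε
  choose M hM hMη' hMsweep using fun k =>
    hf.exists_forall_measure_sweep_le (N k) (hlt k) ((ENNReal.le_tsum k).trans hsum.le)
  refine ⟨(⋃ k, M k)ᶜ, (MeasurableSet.iUnion hM).compl, ?_, fun n => ?_⟩
  · rw [prob_compl_eq_one_sub (MeasurableSet.iUnion hM), tsub_pos_iff_lt]
    exact (measure_iUnion_le M).trans_lt ((ENNReal.tsum_le_tsum hMη').trans_lt hsum)
  · obtain ⟨k, hn, hεn⟩ := hcover n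
    exact (hMsweep k _ (compl_subset_compl.2 (subset_iUnion M k)) n hn).trans
      (tsub_le_tsub_left hεn 1)

theorem stmt_7_general {X : Type*} [MeasurableSpace X] [StandardBorelSpace X]
    (μ : Measure X) [IsProbabilityMeasure μ] [NullSingletonClass μ]
    (τ : X ≃ᵐ X) (hτ : Ergodic τ μ)
    (ε : ℕ → ℝ) (hhalf : ∀ n, ε n < 1 / 2)
    (hlim : Tendsto ε atTop (nhds 0)) :
    ∃ E : Set X, MeasurableSet E ∧ 0 < μ E ∧
      ∀ n : ℕ, 1 ≤ n →
        μ (⋃ k ∈ Finset.Icc 1 n, (⇑τ.symm)^[k] ⁻¹' E) ≤ 1 - ENNReal.ofReal (ε n) := by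
  obtain ⟨E, hE, hE0, hsweep⟩ := hτ.symm.exists_measure_pos_forall_measure_sweep_le
    (fun n => ENNReal.ofReal_le_ofReal (hhalf n).le) (ENNReal.ofReal_lt_one.2 (by norm_num))
    (by simpa using ENNReal.tendsto_ofReal hlim)
  exact ⟨E, hE, hE0, fun n _ => hsweep n⟩

/-- Slowly sweeping-out sets: for ergodic τ and εₙ ∈ (0, 1/2) decreasing to 0 there is a
set E of positive measure with m(⋃_{k=1}^n τ^k(E)) ≤ 1 - εₙ for all n ≥ 1. -/
theorem stmt_7 {X : Type*} [MeasurableSpace X] [StandardBorelSpace X]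
    (μ : Measure X) [IsProbabilityMeasure μ] [NullSingletonClass μ]
    (τ : X ≃ᵐ X) (hτ : Ergodic τ μ)
    (ε : ℕ → ℝ) (hpos : ∀ n, 0 < ε n) (hhalf : ∀ n, ε n < 1 / 2)
    (hmono : Antitone ε) (hlim : Tendsto ε atTop (nhds 0)) :
    ∃ E : Set X, MeasurableSet E ∧ 0 < μ E ∧
      ∀ n : ℕ, 1 ≤ n →
        μ (⋃ k ∈ Finset.Icc 1 n, (⇑τ.symm)^[k] ⁻¹' E) ≤ 1 - ENNReal.ofReal (ε n) :=
  stmt_7_general μ τ hτ ε hhalf hlim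
end

section
/- Let τ be a measure-preserving transformation of [0,1] (circle, Lebesgue measure) and suppose E is a measurable set with m(⋃_{k=1}^n τ^{-k}(E)) < 1 for all n ≥ 1. Let F = [0,1] \ E and f = 1_F − m(F). Then f is a bounded mean-zero function and ‖∑_{k=1}^n f ∘ τ^k‖_∞ ≥ n·m(E) for all n ≥ 1; consequently f is not a coboundary f = F' − F' ∘ τ with transfer function F' ∈ L^∞. -/
open MeasureTheory Filter Set
open scoped ENNReal

/-!
On the set of points whose first `n` images under `τ` all avoid `E` — which has positive
measure by the sweeping-out hypothesis — every summand of `Sₙ f` equals `1 - m(Eᶜ) = m(E)`,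
so `‖Sₙ f‖_∞ ≥ n m(E)`. A coboundary `F' - F' ∘ τ` telescopes, so its ergodic sums stay
bounded by `2 ‖F'‖_∞`, which is impossible when `m(E) > 0`.
-/

section Telescoping

variable {α G : Type*} [AddCommGroup G]

theorem sum_Icc_iterate_eq_birkhoffSum (τ : α → α) (g : α → G) (n : ℕ) (x : α) :
    ∑ k ∈ Finset.Icc 1 n, g (τ^[k] x) = birkhoffSum τ g n (τ x) := by
  induction n with
  | zero => simp
  | succ n ih =>
    rw [Finset.sum_Icc_succ_top (by omega), ih, birkhoffSum_succ,
      Function.iterate_succ_apply]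

theorem birkhoffSum_coboundary (τ : α → α) (F : α → G) (n : ℕ) (x : α) :
    birkhoffSum τ (fun y => F y - F (τ y)) n x = F x - F (τ^[n] x) := by
  induction n with
  | zero => simp
  | succ n ih =>
    rw [birkhoffSum_succ, ih, Function.iterate_succ_apply']
    abel

end Telescoping

section EssSup

variable {Ω E : Type*} [MeasurableSpace Ω] {μ : Measure Ω} [NormedAddCommGroup E]

theorem le_eLpNorm_top_of_forall_mem {g : Ω → E} {A : Set Ω} (hA : μ A ≠ 0)
    {c : ℝ≥0∞} (hc : ∀ x ∈ A, c ≤ ‖g x‖ₑ) : c ≤ eLpNorm g ⊤ μ := by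
  obtain ⟨x, hxA, hx⟩ :=
    ((frequently_ae_iff (p := (· ∈ A))).2 hA).and_eventually (ae_le_eLpNormEssSup (f := g))
    |>.exists
  exact (hc x hxA).trans hx

theorem ae_forall_enorm_iterate_le_eLpNorm_top {τ : Ω → Ω}
    (hτ : Measure.QuasiMeasurePreserving τ μ μ) (F : Ω → E) :
    ∀ᵐ x ∂μ, ∀ k : ℕ, ‖F (τ^[k] x)‖ₑ ≤ eLpNorm F ⊤ μ :=
  ae_all_iff.2 fun k => (hτ.iterate k).ae (p := fun y => ‖F y‖ₑ ≤ eLpNorm F ⊤ μ)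
    ae_le_eLpNormEssSup

theorem eLpNorm_top_sum_Icc_iterate_le_of_coboundary {τ : Ω → Ω}
    (hτ : Measure.QuasiMeasurePreserving τ μ μ) {g F : Ω → E}
    (hg : ∀ᵐ x ∂μ, g x = F x - F (τ x)) (n : ℕ) :
    eLpNorm (fun x => ∑ k ∈ Finset.Icc 1 n, g (τ^[k] x)) ⊤ μ ≤ 2 * eLpNorm F ⊤ μ := by
  have hg_iter : ∀ᵐ x ∂μ, ∀ k : ℕ, g (τ^[k] x) = F (τ^[k] x) - F (τ (τ^[k] x)) :=
    ae_all_iff.2 fun k => (hτ.iterate k).ae hg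
  rw [eLpNorm_exponent_top]
  refine essSup_le_of_ae_le _ ?_
  filter_upwards [hg_iter, ae_forall_enorm_iterate_le_eLpNorm_top hτ F] with x hgx hFx
  have htelescope : ∑ k ∈ Finset.Icc 1 n, g (τ^[k] x) = F (τ^[1] x) - F (τ^[n + 1] x) := by
    rw [Finset.sum_congr rfl fun k _ => hgx k,
      sum_Icc_iterate_eq_birkhoffSum τ (fun y => F y - F (τ y)), birkhoffSum_coboundary,
      ← Function.iterate_succ_apply, Function.iterate_one]
  calc ‖∑ k ∈ Finset.Icc 1 n, g (τ^[k] x)‖ₑ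
      ≤ ‖F (τ^[1] x)‖ₑ + ‖F (τ^[n + 1] x)‖ₑ := by
        rw [htelescope]
        exact enorm_sub_le
    _ ≤ eLpNorm F ⊤ μ + eLpNorm F ⊤ μ := add_le_add (hFx 1) (hFx (n + 1))
    _ = 2 * eLpNorm F ⊤ μ := (two_mul _).symm

end EssSup

section Sweeping

variable {Ω : Type*} [MeasurableSpace Ω] {μ : Measure Ω} [IsProbabilityMeasure μ]

theorem measure_iInter_iterate_preimage_compl_ne_zero {τ : Ω → Ω} {E : Set Ω} {n : ℕ}
    (hsweep : μ (⋃ k ∈ Finset.Icc 1 n, τ^[k] ⁻¹' E) < 1) :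
    μ (⋂ k ∈ Finset.Icc 1 n, τ^[k] ⁻¹' Eᶜ) ≠ 0 := by
  intro hzero
  have hcover := measure_univ_le_add_compl (μ := μ) (⋂ k ∈ Finset.Icc 1 n, τ^[k] ⁻¹' Eᶜ)
  rw [measure_univ, hzero, zero_add] at hcover
  simp only [compl_iInter, preimage_compl, compl_compl] at hcover
  exact hcover.not_gt hsweep

theorem integral_indicator_one_sub_measureReal {s : Set Ω} (hs : MeasurableSet s) :
    ∫ x, (s.indicator (fun _ => (1 : ℝ)) x - μ.real s) ∂μ = 0 := by
  rw [integral_sub ((integrable_indicator_iff hs).2 (integrable_const _).integrableOn)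
    (integrable_const _), integral_indicator_const _ hs]
  simp

theorem ofReal_mul_measureReal_le_eLpNorm_top_sum {τ : Ω → Ω} {E : Set Ω}
    (hE : MeasurableSet E) {n : ℕ} (hsweep : μ (⋃ k ∈ Finset.Icc 1 n, τ^[k] ⁻¹' E) < 1) :
    ENNReal.ofReal (n * μ.real E) ≤ eLpNorm (fun x => ∑ k ∈ Finset.Icc 1 n,
      (Eᶜ.indicator (fun _ => (1 : ℝ)) (τ^[k] x) - μ.real Eᶜ)) ⊤ μ := by
  refine le_eLpNorm_top_of_forall_mem (measure_iInter_iterate_preimage_compl_ne_zero hsweep)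
    fun x hx => ?_
  have hterm : ∀ k ∈ Finset.Icc 1 n,
      Eᶜ.indicator (fun _ => (1 : ℝ)) (τ^[k] x) - μ.real Eᶜ = μ.real E := fun k hk => by
    have hk : τ^[k] x ∈ Eᶜ := mem_iInter₂.1 hx k hk
    rw [indicator_of_mem hk, probReal_compl_eq_one_sub hE, sub_sub_cancel]
  rw [Finset.sum_congr rfl hterm, Finset.sum_const, Nat.card_Icc, nsmul_eq_mul,
    Nat.add_sub_cancel, Real.enorm_eq_ofReal (by positivity)]

end Sweeping

/-- If E has m(⋃_{k=1}^n τ^{-k}(E)) < 1 for all n, then f = 1_{Eᶜ} - m(Eᶜ) is a bounded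
mean-zero function with ‖Sₙf‖_∞ ≥ n·m(E), hence not a coboundary with L^∞ transfer
function when m(E) > 0. -/
theorem stmt_12 (τ : UnitAddCircle → UnitAddCircle) (hτ : MeasurePreserving τ volume volume)
    (E : Set UnitAddCircle) (hE : MeasurableSet E)
    (hsweep : ∀ n : ℕ, 1 ≤ n → volume (⋃ k ∈ Finset.Icc 1 n, τ^[k] ⁻¹' E) < 1)
    (f : UnitAddCircle → ℝ)
    (hf : f = fun x => (Eᶜ).indicator (fun _ => (1 : ℝ)) x - (volume Eᶜ).toReal) :
    eLpNorm f ⊤ volume < ⊤ ∧ (∫ x, f x ∂volume) = 0 ∧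
      (∀ n : ℕ, 1 ≤ n →
        ENNReal.ofReal ((n : ℝ) * (volume E).toReal) ≤
          eLpNorm (fun x => ∑ k ∈ Finset.Icc 1 n, f (τ^[k] x)) ⊤ volume) ∧
      (0 < volume E →
        ¬ ∃ F' : UnitAddCircle → ℝ, Measurable F' ∧ eLpNorm F' ⊤ volume < ⊤ ∧
            ∀ᵐ x ∂(volume : Measure UnitAddCircle), f x = F' x - F' (τ x)) := by
  have : IsProbabilityMeasure (volume : Measure UnitAddCircle) := ⟨UnitAddCircle.measure_univ⟩
  subst hf
  have hlower n (hn : 1 ≤ n) :=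
    ofReal_mul_measureReal_le_eLpNorm_top_sum (τ := τ) hE (hsweep n hn)
  refine ⟨((memLp_indicator_const ⊤ hE.compl 1 (.inr (measure_ne_top _ _))).sub
      (memLp_top_const _)).eLpNorm_lt_top, integral_indicator_one_sub_measureReal hE.compl,
    hlower, ?_⟩
  rintro hEpos ⟨F', -, hF'_bdd, hcob⟩
  obtain ⟨n, hn⟩ := ENNReal.exists_nat_mul_gt (b := 2 * eLpNorm F' ⊤ volume) hEpos.ne'
    (ENNReal.mul_ne_top (by simp) hF'_bdd.ne)
  have hn_pos : 1 ≤ n := Nat.one_le_iff_ne_zero.2 fun h => by simp [h] at hn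
  have hupper := eLpNorm_top_sum_Icc_iterate_le_of_coboundary hτ.quasiMeasurePreserving hcob n
  have hlower_n := hlower n hn_pos
  rw [measureReal_def, ENNReal.ofReal_mul n.cast_nonneg, ENNReal.ofReal_natCast,
    ENNReal.ofReal_toReal (measure_ne_top _ _)] at hlower_n
  exact (hlower_n.trans hupper).not_gt hn
end

section
/- Let τ be an ergodic invertible measure-preserving transformation of the circle [0,1) with Lebesgue measure, and suppose (ρ_n) is a decreasing sequence with ρ_n → 0 such that for almost every x there exists N(x) with: for all n ≥ N(x), the arcs of radius ρ_n centered at τ^1(x), …, τ^n(x) cover the circle. Then for almost every x, every point y not in the orbit {τ^k(x) : k ≥ 1} satisfies |y − τ^n(x)| ≤ ρ_n (mod 1) for infinitely many n. -/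
open MeasureTheory Filter Set Topology

/-
If y is off the orbit and dist(y, τⁿ(x)) ≤ ρₙ only for n ≤ K, then for large n the point y
is covered by an arc about τᵏ(x) with k > K (excluded, since ρₙ ≤ ρₖ) or with k ≤ K. Hence y lies
within ρₙ → 0 of the finite set {τ¹(x), …, τᴷ(x)}, so it belongs to it, a contradiction.
-/

theorem Set.Finite.mem_of_eventually_exists_dist_le {X ι : Type*} [MetricSpace X]
    {l : Filter ι} [l.NeBot] {S : Set X} (hS : S.Finite) {ρ : ι → ℝ}
    (hρ : Tendsto ρ l (𝓝 0)) {y : X} (hy : ∀ᶠ i in l, ∃ w ∈ S, dist y w ≤ ρ i) : y ∈ S := by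
  obtain ⟨i, w, hw, -⟩ := hy.exists
  have hinf : Metric.infDist y S ≤ 0 :=
    ge_of_tendsto hρ <| hy.mono fun i ⟨w, hw, hd⟩ => (Metric.infDist_le_dist_of_mem hw).trans hd
  exact (hS.isClosed.mem_iff_infDist_zero ⟨w, hw⟩).2
    (le_antisymm hinf Metric.infDist_nonneg)

theorem infinite_setOf_dist_le_of_eventually_covered {X : Type*} [MetricSpace X]
    (z : ℕ → X) {ρ : ℕ → ℝ} (hmono : Antitone ρ) (hlim : Tendsto ρ atTop (𝓝 0)) {y : X}
    (hcov : ∀ᶠ n in atTop, ∃ k ∈ Finset.Icc 1 n, dist y (z k) ≤ ρ n)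
    (hy : ∀ k, 1 ≤ k → z k ≠ y) : {n | dist y (z n) ≤ ρ n}.Infinite := by
  by_contra hfin
  obtain ⟨K, hK⟩ := (Set.not_infinite.1 hfin).bddAbove
  have hnear : ∀ᶠ n in atTop, ∃ w ∈ z '' Icc 1 K, dist y w ≤ ρ n := by
    filter_upwards [hcov] with n ⟨k, hk, hd⟩
    obtain ⟨hk1, hkn⟩ := Finset.mem_Icc.1 hk
    have hkK : k ≤ K := hK (hd.trans (hmono hkn))
    exact ⟨z k, mem_image_of_mem z ⟨hk1, hkK⟩, hd⟩
  obtain ⟨k, hk, hzk⟩ := ((finite_Icc 1 K).image z).mem_of_eventually_exists_dist_le hlim hnear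
  exact hy k hk.1 hzk

theorem stmt_16_general (τ : UnitAddCircle → UnitAddCircle)
    (ρ : ℕ → ℝ) (hmono : Antitone ρ)
    (hlim : Tendsto ρ atTop (nhds 0))
    (hcover : ∀ᵐ x ∂(volume : Measure UnitAddCircle), ∃ N : ℕ, ∀ n, N ≤ n →
      Set.univ ⊆ ⋃ k ∈ Finset.Icc 1 n, Metric.closedBall (τ^[k] x) (ρ n)) :
    ∀ᵐ x ∂(volume : Measure UnitAddCircle), ∀ y : UnitAddCircle,
      (∀ k : ℕ, 1 ≤ k → τ^[k] x ≠ y) →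
      {n : ℕ | dist y (τ^[n] x) ≤ ρ n}.Infinite := by
  filter_upwards [hcover] with x ⟨N, hN⟩ y hy
  refine infinite_setOf_dist_le_of_eventually_covered (fun k => τ^[k] x) hmono hlim ?_ hy
  filter_upwards [eventually_ge_atTop N] with n hn
  simpa only [mem_iUnion, Metric.mem_closedBall, exists_prop] using hN n hn (mem_univ y)

/-- If for a.e. x the arcs of radius ρₙ about τ¹(x), …, τⁿ(x) eventually cover the circle,
then for a.e. x every point y off the forward orbit satisfies dist(y, τⁿ(x)) ≤ ρₙ
infinitely often. -/
theorem stmt_16 (τ : UnitAddCircle → UnitAddCircle) (hτ : Ergodic τ volume)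
    (ρ : ℕ → ℝ) (hρpos : ∀ n, 0 < ρ n) (hmono : Antitone ρ)
    (hlim : Tendsto ρ atTop (nhds 0))
    (hcover : ∀ᵐ x ∂(volume : Measure UnitAddCircle), ∃ N : ℕ, ∀ n, N ≤ n →
      Set.univ ⊆ ⋃ k ∈ Finset.Icc 1 n, Metric.closedBall (τ^[k] x) (ρ n)) :
    ∀ᵐ x ∂(volume : Measure UnitAddCircle), ∀ y : UnitAddCircle,
      (∀ k : ℕ, 1 ≤ k → τ^[k] x ≠ y) →
      {n : ℕ | dist y (τ^[n] x) ≤ ρ n}.Infinite :=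
  stmt_16_general τ ρ hmono hlim hcover
end
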